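/- arXiv:1408.1560 — 2 statements merged into one kernel-verified Lean document; each statement's English description precedes it below -/
import Mathlib

section
/- Let R be a finite commutative ring with q elements admitting a generating character, fix a level structure with s levels of sizes n_1,…,n_s, let C be an R-submodule of R^N with N = n_1+⋯+n_s, and let z_1,…,z_s ∈ ℂ. Then the poset level weight enumerator of the dual code satisfies ∑_{v ∈ C^⊥} ∏_{j=1}^s z_j^{w(v^j)} = (1/|C|) ∑_{u ∈ C} ∏_{j=1}^s ( ∑_{p=0}^{n_j} [ ∑_{a=0}^{p} (−1)^a (q−1)^{p−a} · C(w(u^j), a) · C(n_j − w(u^j), p−a) ] z_j^p ), where C(m,k) denotes the binomial coefficient (with C(m,k) = 0 for k > m). -/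
/-!
A generating character `χ` is orthogonal on every code: `∑_{u ∈ C} χ ⟨u, v⟩` equals `|C|` when
`v ∈ C^⊥` and vanishes otherwise, since the values `⟨u, v⟩` then fill a nonzero ideal. Hence
`|C| · P_W(C^⊥)` is the sum over `u ∈ C` of the `χ`-transform of `v ↦ ∏_j z_j^{w(v^j)}`. This
weight is a product over coordinates, so its transform factorises into the one-coordinate sums
`∑_r χ(a r) z^{[r ≠ 0]}`, which are `1 - z` for `a ≠ 0` and `1 + (q - 1) z` for `a = 0`. The
level-`j` factor is therefore `(1 - z_j)^{w(u^j)} (1 + (q - 1) z_j)^{n_j - w(u^j)}`, whose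
coefficients come from multiplying out the two binomial expansions.
-/

open Finset Polynomial

namespace AddChar

lemma map_sum_eq_prod {ι A M : Type*} [AddCommMonoid A] [CommMonoid M]
    (χ : AddChar A M) (s : Finset ι) (f : ι → A) :
    χ (∑ i ∈ s, f i) = ∏ i ∈ s, χ (f i) :=
  map_prod χ.toMonoidHom (fun i => Multiplicative.ofAdd (f i)) s

lemma sum_pi_mul_prod {ι A R' : Type*} [Fintype ι] [DecidableEq ι] {κ : ι → Type*}
    [∀ i, Fintype (κ i)] [AddCommMonoid A] [CommSemiring R'] (χ : AddChar A R')
    (f : ∀ i, κ i → A) (g : ∀ i, κ i → R') :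
    ∑ x : ∀ i, κ i, χ (∑ i, f i (x i)) * ∏ i, g i (x i) = ∏ i, ∑ y, χ (f i y) * g i y := by
  simp_rw [map_sum_eq_prod, ← prod_mul_distrib]
  exact (Fintype.prod_sum fun i y => χ (f i y) * g i y).symm

def IsGenerating {R R' : Type*} [CommRing R] [CommMonoid R'] (χ : AddChar R R') : Prop :=
  ∀ J : Ideal R, (∀ a ∈ J, χ a = 1) → J = ⊥

lemma IsGenerating.compAddMonoidHom_eq_zero_iff {R R' M : Type*} [CommRing R] [CommMonoid R']
    [AddCommMonoid M] [Module R M] {χ : AddChar R R'} (hχ : χ.IsGenerating) (L : M →ₗ[R] R) :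
    χ.compAddMonoidHom L.toAddMonoidHom = 0 ↔ L = 0 := by
  refine ⟨fun h => ?_, fun h => by ext; simp [h]⟩
  rw [← LinearMap.range_eq_bot]
  refine hχ _ ?_
  rintro _ ⟨m, rfl⟩
  exact DFunLike.congr_fun h m

namespace IsGenerating

variable {R R' M : Type*} [CommRing R] [CommRing R'] [IsDomain R'] [AddCommMonoid M] [Module R M]
  {χ : AddChar R R'}

open Classical in
lemma sum_apply_linearMap [Fintype M] (hχ : χ.IsGenerating) (L : M →ₗ[R] R) :
    ∑ m, χ (L m) = if L = 0 then (Fintype.card M : R') else 0 := by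
  let := Module.addCommMonoidToAddCommGroup R (M := M)
  simpa [hχ.compAddMonoidHom_eq_zero_iff] using sum_eq_ite (χ.compAddMonoidHom L.toAddMonoidHom)

lemma sum_mul_left [Fintype R] [DecidableEq R] (hχ : χ.IsGenerating) (a : R) :
    ∑ r, χ (a * r) = if a = 0 then (Fintype.card R : R') else 0 := by
  simpa [LinearMap.mulLeft_eq_zero_iff] using hχ.sum_apply_linearMap (LinearMap.mulLeft R a)

open Classical in
lemma sum_submodule_apply_bilin [Fintype M] (hχ : χ.IsGenerating) (B : M →ₗ[R] M →ₗ[R] R)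
    (C : Submodule R M) (v : M) :
    ∑ u : C, χ (B u v) = if ∀ u ∈ C, B u v = 0 then (Fintype.card C : R') else 0 := by
  have hL : B.flip v ∘ₗ C.subtype = 0 ↔ ∀ u ∈ C, B u v = 0 := by
    simp [LinearMap.ext_iff]
  simpa [hL] using hχ.sum_apply_linearMap (B.flip v ∘ₗ C.subtype)

open Classical in
lemma card_mul_sum_orthogonal [Fintype M] (hχ : χ.IsGenerating) (B : M →ₗ[R] M →ₗ[R] R)
    (C : Submodule R M) (D : Finset M) (hD : ∀ v, v ∈ D ↔ ∀ u ∈ C, B u v = 0) (f : M → R') :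
    Fintype.card C * ∑ v ∈ D, f v = ∑ u : C, ∑ v, χ (B u v) * f v := by
  rw [sum_comm]
  simp_rw [← sum_mul, hχ.sum_submodule_apply_bilin, ← hD, ite_mul, zero_mul, sum_ite_mem,
    univ_inter, mul_sum]

lemma sum_mul_ite_eq_zero [Fintype R] [DecidableEq R] (hχ : χ.IsGenerating) (a : R) (z : R') :
    ∑ r, χ (a * r) * (if r = 0 then 1 else z)
      = if a = 0 then 1 + ((Fintype.card R : R') - 1) * z else 1 - z := by
  have hsplit (r : R) : (if r = 0 then 1 else z) = z + if r = 0 then 1 - z else 0 := by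
    split_ifs <;> ring
  simp_rw [hsplit, mul_add, sum_add_distrib, ← sum_mul, hχ.sum_mul_left, mul_ite, mul_zero,
    sum_ite_eq' univ (0 : R), mem_univ, if_true, mul_zero, map_zero_eq_one, one_mul]
  split_ifs <;> ring

end IsGenerating

end AddChar

section Hamming

variable {ι M : Type*} [Fintype ι] {β : ι → Type*} [∀ i, Zero (β i)] [∀ i, DecidableEq (β i)]
  [CommMonoid M]

lemma prod_ite_eq_zero_eq_pow_mul_pow (x : ∀ i, β i) (a b : M) :
    ∏ i, (if x i = 0 then a else b)
      = b ^ hammingNorm x * a ^ (Fintype.card ι - hammingNorm x) := by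
  have hcard := card_filter_add_card_filter_not (s := univ) (fun i => x i = 0)
  change _ + hammingNorm x = _ at hcard
  rw [card_univ] at hcard
  rw [prod_ite, prod_const, prod_const, mul_comm]
  congr 2
  omega

lemma pow_hammingNorm_eq_prod (x : ∀ i, β i) (z : M) :
    z ^ hammingNorm x = ∏ i, if x i = 0 then 1 else z := by
  simp [prod_ite_eq_zero_eq_pow_mul_pow]

end Hamming

lemma AddChar.IsGenerating.sum_apply_dotProduct_mul_pow_hammingNorm {ι R R' : Type*} [Fintype ι]
    [DecidableEq ι] [CommRing R] [Fintype R] [DecidableEq R] [CommRing R'] [IsDomain R']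
    {χ : AddChar R R'} (hχ : χ.IsGenerating) (a : ι → R) (z : R') :
    ∑ x : ι → R, χ (∑ i, a i * x i) * z ^ hammingNorm x
      = (1 - z) ^ hammingNorm a
        * (1 + ((Fintype.card R : R') - 1) * z) ^ (Fintype.card ι - hammingNorm a) := by
  simp_rw [pow_hammingNorm_eq_prod _ z]
  rw [AddChar.sum_pi_mul_prod χ (fun i r => a i * r) fun _ r => if r = 0 then 1 else z]
  simp_rw [hχ.sum_mul_ite_eq_zero]
  exact prod_ite_eq_zero_eq_pow_mul_pow a _ _

section Binomial

variable {R : Type*} [CommRing R]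

lemma coeff_one_add_X_pow_comp_C_mul_X (c : R) (k b : ℕ) :
    (((1 + X) ^ k).comp (C c * X)).coeff b = k.choose b * c ^ b := by
  rw [comp_C_mul_X_coeff, coeff_one_add_X_pow]

lemma natDegree_one_add_X_pow_comp_C_mul_X_le (c : R) (k : ℕ) :
    (((1 + X) ^ k).comp (C c * X)).natDegree ≤ k :=
  natDegree_comp_le.trans <|
    (Nat.mul_le_mul (by compute_degree!) (by compute_degree!)).trans (mul_one k).le

lemma one_sub_pow_mul_one_add_mul_pow_eq_sum {w m : ℕ} (hw : w ≤ m) (c z : R) :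
    (1 - z) ^ w * (1 + c * z) ^ (m - w)
      = ∑ p ∈ range (m + 1), (∑ a ∈ range (p + 1),
          (-1) ^ a * c ^ (p - a) * (w.choose a : R) * ((m - w).choose (p - a) : R)) * z ^ p := by
  set P : R[X] := ((1 + X) ^ w).comp (C (-1) * X) * ((1 + X) ^ (m - w)).comp (C c * X)
  have hdeg : P.natDegree < m + 1 :=
    (natDegree_mul_le.trans (add_le_add (natDegree_one_add_X_pow_comp_C_mul_X_le _ w)
      (natDegree_one_add_X_pow_comp_C_mul_X_le c (m - w)))).trans_lt (by omega)
  have heval : P.eval z = (1 - z) ^ w * (1 + c * z) ^ (m - w) := by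
    simp [P, sub_eq_add_neg]
  rw [← heval, eval_eq_sum_range' hdeg]
  refine sum_congr rfl fun p _ => ?_
  rw [coeff_mul, Nat.sum_antidiagonal_eq_sum_range_succ_mk]
  congr 1
  refine sum_congr rfl fun a _ => ?_
  simp only [coeff_one_add_X_pow_comp_C_mul_X]
  ring

end Binomial

/-- The standard inner product on `R^N`, written levelwise for `R^N = ∏ i, R^{κ i}`. -/
def levelInner {ι : Type*} [Fintype ι] (R : Type*) [CommRing R] (κ : ι → Type*)
    [∀ i, Fintype (κ i)] : (Π i, κ i → R) →ₗ[R] (Π i, κ i → R) →ₗ[R] R :=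
  LinearMap.mk₂ R (fun u v => ∑ i, ∑ k, u i k * v i k)
    (fun _ _ _ => by simp only [Pi.add_apply, add_mul, sum_add_distrib])
    (fun _ _ _ => by simp only [Pi.smul_apply, smul_eq_mul, mul_sum, mul_assoc])
    (fun _ _ _ => by simp only [Pi.add_apply, mul_add, sum_add_distrib])
    (fun _ _ _ => by simp only [Pi.smul_apply, smul_eq_mul, mul_sum, mul_left_comm])

@[simp]
lemma levelInner_apply {ι : Type*} [Fintype ι] {R : Type*} [CommRing R] {κ : ι → Type*}
    [∀ i, Fintype (κ i)] (u v : Π i, κ i → R) :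
    levelInner R κ u v = ∑ i, ∑ k, u i k * v i k :=
  rfl

open scoped Classical

theorem poset_level_weight_enumerator_macwilliams_general
    {R : Type*} [CommRing R] [Fintype R] [DecidableEq R]
    (hR : ∃ χ : AddChar R ℂ, ∀ J : Ideal R, (∀ a ∈ J, χ a = 1) → J = ⊥)
    (s : ℕ) (n : Fin s → ℕ)
    (C : Submodule R (Π j : Fin s, Fin (n j) → R))
    (z : Fin s → ℂ) :
    ∑ v ∈ Finset.univ.filter
        (fun v : Π j : Fin s, Fin (n j) → R => ∀ u ∈ C, ∑ j, ∑ k, u j k * v j k = 0),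
      ∏ j, z j ^ hammingNorm (v j)
    = (Fintype.card C : ℂ)⁻¹ *
        ∑ u : C, ∏ j,
          ∑ p ∈ Finset.range (n j + 1),
            (∑ a ∈ Finset.range (p + 1),
              (-1 : ℂ) ^ a * ((Fintype.card R : ℂ) - 1) ^ (p - a) *
                (Nat.choose (hammingNorm ((u : Π j : Fin s, Fin (n j) → R) j)) a : ℂ) *
                (Nat.choose (n j - hammingNorm ((u : Π j : Fin s, Fin (n j) → R) j))
                  (p - a) : ℂ)) * z j ^ p := by
  obtain ⟨χ, hχ⟩ : ∃ χ : AddChar R ℂ, χ.IsGenerating := hR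
  rw [eq_inv_mul_iff_mul_eq₀ (Nat.cast_ne_zero.mpr Fintype.card_ne_zero),
    hχ.card_mul_sum_orthogonal (levelInner R fun j => Fin (n j)) C _ (by simp)]
  refine sum_congr rfl fun u _ => ?_
  refine (AddChar.sum_pi_mul_prod χ (fun j x => ∑ k, (u : Π j, Fin (n j) → R) j k * x k)
    fun j x => z j ^ hammingNorm x).trans (prod_congr rfl fun j _ => ?_)
  have hw : hammingNorm ((u : Π j, Fin (n j) → R) j) ≤ n j :=
    hammingNorm_le_card_fintype.trans_eq (Fintype.card_fin _)
  rw [hχ.sum_apply_dotProduct_mul_pow_hammingNorm, Fintype.card_fin,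
    one_sub_pow_mul_one_add_mul_pow_eq_sum hw]

/-- MacWilliams-type identity for the poset level weight enumerator
`P_W(C) = ∑_{u ∈ C} ∏_j z_j^{w(u^j)}` of a linear code over a finite commutative
Frobenius ring with `q = |R|` elements. `R^N` is identified with `Π j, R^{n j}`
and `w` is the Hamming weight (`hammingNorm`). -/
theorem poset_level_weight_enumerator_macwilliams
    {R : Type*} [CommRing R] [Fintype R] [DecidableEq R]
    (hR : ∃ χ : AddChar R ℂ, ∀ J : Ideal R, (∀ a ∈ J, χ a = 1) → J = ⊥)
    (s : ℕ) (hs : 0 < s) (n : Fin s → ℕ) (hn : ∀ j, 0 < n j)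
    (C : Submodule R (Π j : Fin s, Fin (n j) → R))
    (z : Fin s → ℂ) :
    ∑ v ∈ Finset.univ.filter
        (fun v : Π j : Fin s, Fin (n j) → R => ∀ u ∈ C, ∑ j, ∑ k, u j k * v j k = 0),
      ∏ j, z j ^ hammingNorm (v j)
    = (Fintype.card C : ℂ)⁻¹ *
        ∑ u : C, ∏ j,
          ∑ p ∈ Finset.range (n j + 1),
            (∑ a ∈ Finset.range (p + 1),
              (-1 : ℂ) ^ a * ((Fintype.card R : ℂ) - 1) ^ (p - a) *
                (Nat.choose (hammingNorm ((u : Π j : Fin s, Fin (n j) → R) j)) a : ℂ) *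
                (Nat.choose (n j - hammingNorm ((u : Π j : Fin s, Fin (n j) → R) j))
                  (p - a) : ℂ)) * z j ^ p :=
  poset_level_weight_enumerator_macwilliams_general hR s n C z
end

section
/- Let R be a finite commutative ring with q elements admitting a generating character, fix a level structure with s levels of sizes n_1,…,n_s and spotty parameters t_1,…,t_s with 1 ≤ t_j ≤ n_j, let C be an R-submodule of R^N with N = n_1+⋯+n_s, and let z_1,…,z_s ∈ ℂ. Then the m-spotty poset level weight enumerator of the dual code satisfies ∑_{v ∈ C^⊥} ∏_{j=1}^s z_j^{⌈w(v^j)/t_j⌉} = (1/|C|) ∑_{u ∈ C} ∏_{j=1}^s ( ∑_{p=0}^{n_j} [ ∑_{a=0}^{p} (−1)^a (q−1)^{p−a} · C(w(u^j), a) · C(n_j − w(u^j), p−a) ] z_j^{⌈p/t_j⌉} ), where C(m,k) denotes the binomial coefficient (with C(m,k) = 0 for k > m) and ⌈x⌉ is the ceiling. -/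
open scoped Classical

open Finset Polynomial


lemma mw_coeff (c : ℂ) (m k : ℕ) :
    ((1 + Polynomial.C c * Polynomial.X : Polynomial ℂ) ^ m).coeff k
      = c ^ k * (m.choose k : ℂ) := by
  rw [add_comm, add_pow, finset_sum_coeff]
  have h : ∀ i ∈ Finset.range (m + 1),
      ((Polynomial.C c * Polynomial.X) ^ i * 1 ^ (m - i) *
        ((m.choose i : ℕ) : Polynomial ℂ)).coeff k
        = if i = k then c ^ k * (m.choose k : ℂ) else 0 := by
    intro i hi
    rw [one_pow, mul_one, ← Polynomial.C_eq_natCast, Polynomial.coeff_mul_C,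
      mul_pow, ← Polynomial.C_pow, Polynomial.coeff_C_mul, Polynomial.coeff_X_pow]
    by_cases hik : i = k
    · subst hik; simp
    · simp [hik, Ne.symm hik]
  rw [Finset.sum_congr rfl h, Finset.sum_ite_eq' (Finset.range (m + 1)) k]
  by_cases hk : k ∈ Finset.range (m + 1)
  · simp [hk]
  · rw [if_neg hk, Nat.choose_eq_zero_of_lt (by simpa using Nat.lt_of_succ_le (not_lt.1 (by simpa using hk)))]
    simp


lemma mw_map_sum {ι R : Type*} [AddCommMonoid R] (χ : AddChar R ℂ)
    (s : Finset ι) (f : ι → R) : χ (∑ i ∈ s, f i) = ∏ i ∈ s, χ (f i) := by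
  induction s using Finset.cons_induction with
  | empty => simp
  | cons a s ha ih => rw [Finset.sum_cons, Finset.prod_cons, AddChar.map_add_eq_mul, ih]

-- character sum over R for r ≠ 0
lemma mw_char_sum {R : Type*} [CommRing R] [Fintype R]
    (χ : AddChar R ℂ) (hχ : ∀ J : Ideal R, (∀ a ∈ J, χ a = 1) → J = ⊥)
    {r : R} (hr : r ≠ 0) : ∑ c : R, χ (r * c) = 0 := by
  have : ∑ c : R, (χ.mulShift r) c = 0 := by
    refine AddChar.sum_eq_zero_iff_ne_zero.2 ?_
    intro h0
    apply hr
    have h1 : ∀ c : R, χ (r * c) = 1 := by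
      intro c
      have := DFunLike.congr_fun h0 c
      simpa [AddChar.mulShift_apply] using this
    have hJ : Ideal.span {r} = ⊥ := by
      refine hχ _ ?_
      intro a ha
      obtain ⟨b, hb⟩ := Ideal.mem_span_singleton'.1 ha
      rw [← hb, mul_comm]
      exact h1 b
    have := Ideal.mem_span_singleton_self r
    rw [hJ] at this
    simpa using this
  simpa [AddChar.mulShift_apply] using this

lemma mw_level {R : Type*} [CommRing R] [Fintype R] [DecidableEq R]
    (χ : AddChar R ℂ) (hχ : ∀ J : Ideal R, (∀ a ∈ J, χ a = 1) → J = ⊥)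
    {n : ℕ} (u : Fin n → R) (p : ℕ) :
    ∑ v ∈ Finset.univ.filter (fun v : Fin n → R => hammingNorm v = p),
        ∏ k, χ (u k * v k)
      = ∑ a ∈ Finset.range (p + 1),
          (-1 : ℂ) ^ a * ((Fintype.card R : ℂ) - 1) ^ (p - a) *
            (Nat.choose (hammingNorm u) a : ℂ) *
            (Nat.choose (n - hammingNorm u) (p - a) : ℂ) := by
  set q1 : ℂ := (Fintype.card R : ℂ) - 1 with hq1
  set P : Polynomial ℂ :=
    ∑ v : Fin n → R, Polynomial.C (∏ k, χ (u k * v k)) * Polynomial.X ^ hammingNorm v with hP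
  -- coefficient extraction
  have h1 : P.coeff p = ∑ v ∈ Finset.univ.filter (fun v : Fin n → R => hammingNorm v = p),
      ∏ k, χ (u k * v k) := by
    rw [hP, finset_sum_coeff, Finset.sum_filter]
    refine Finset.sum_congr rfl fun v _ => ?_
    rw [Polynomial.coeff_C_mul, Polynomial.coeff_X_pow]
    by_cases h : hammingNorm v = p
    · simp [h]
    · simp [h, Ne.symm h]
  -- hammingNorm as a sum
  have hnorm : ∀ v : Fin n → R, hammingNorm v = ∑ k, if v k = 0 then 0 else 1 := by
    intro v
    rw [hammingNorm, Finset.card_filter]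
    exact Finset.sum_congr rfl fun k _ => by by_cases h : v k = 0 <;> simp [h]
  -- product form
  have h2 : P = ∏ k : Fin n,
      ∑ c : R, Polynomial.C (χ (u k * c)) * Polynomial.X ^ (if c = (0:R) then 0 else 1) := by
    rw [Finset.prod_univ_sum, Fintype.piFinset_univ, hP]
    refine Finset.sum_congr rfl fun v _ => ?_
    rw [hnorm v, Finset.prod_mul_distrib, ← Finset.prod_pow_eq_pow_sum,
      map_prod (Polynomial.C : ℂ →+* Polynomial ℂ) (fun k => χ (u k * v k)) Finset.univ]
  -- each factor
  have key : ∀ r : R,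
      (∑ c : R, Polynomial.C (χ (r * c)) * Polynomial.X ^ (if c = (0:R) then 0 else 1))
        = 1 + Polynomial.C (if r = 0 then q1 else -1) * Polynomial.X := by
    intro r
    rw [← Finset.sum_filter_add_sum_filter_not Finset.univ (fun c : R => c = 0)]
    have e0 : Finset.univ.filter (fun c : R => c = 0) = {0} := by
      rw [Finset.filter_eq']; simp
    have e1 : ∑ c ∈ Finset.univ.filter (fun c : R => c = 0),
        Polynomial.C (χ (r * c)) * Polynomial.X ^ (if c = (0:R) then 0 else 1) = 1 := by
      rw [e0]; simp
    have e2 : ∑ c ∈ Finset.univ.filter (fun c : R => ¬ c = 0),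
        Polynomial.C (χ (r * c)) * Polynomial.X ^ (if c = (0:R) then 0 else 1)
          = Polynomial.C (∑ c ∈ Finset.univ.filter (fun c : R => ¬ c = 0), χ (r * c))
              * Polynomial.X := by
      rw [map_sum, Finset.sum_mul]
      refine Finset.sum_congr rfl fun c hc => ?_
      rw [if_neg (Finset.mem_filter.1 hc).2, pow_one]
    have e3 : ∑ c ∈ Finset.univ.filter (fun c : R => ¬ c = 0), χ (r * c)
        = (∑ c : R, χ (r * c)) - 1 := by
      rw [← Finset.sum_filter_add_sum_filter_not Finset.univ (fun c : R => c = 0)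
        (fun c => χ (r * c)), e0]
      simp
    rw [e1, e2, e3]
    by_cases hr : r = 0
    · subst hr
      simp only [if_pos rfl]
      congr 2
      simp [hq1, Finset.card_univ]
    · rw [mw_char_sum χ hχ hr, if_neg hr]
      norm_num
  -- product of ites
  have h3 : P = (1 + Polynomial.C (-1) * Polynomial.X) ^ hammingNorm u *
      (1 + Polynomial.C q1 * Polynomial.X) ^ (n - hammingNorm u) := by
    rw [h2]
    have : ∀ k : Fin n,
        (∑ c : R, Polynomial.C (χ (u k * c)) * Polynomial.X ^ (if c = (0:R) then 0 else 1))
          = if u k = 0 then (1 + Polynomial.C q1 * Polynomial.X)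
            else (1 + Polynomial.C (-1) * Polynomial.X) := by
      intro k
      rw [key (u k)]
      by_cases h : u k = 0 <;> simp [h]
    rw [Finset.prod_congr rfl fun k _ => this k, Finset.prod_ite, Finset.prod_const,
      Finset.prod_const]
    have hcard1 : (Finset.univ.filter (fun k : Fin n => ¬ u k = 0)).card = hammingNorm u := rfl
    have hcard0 : (Finset.univ.filter (fun k : Fin n => u k = 0)).card = n - hammingNorm u := by
      have := Finset.card_filter_add_card_filter_not (s := Finset.univ)
        (p := fun k : Fin n => u k = 0)
      rw [Finset.card_univ, Fintype.card_fin] at this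
      omega
    rw [hcard0, hcard1, mul_comm]
  -- combine
  rw [← h1, h3, Polynomial.coeff_mul, Finset.Nat.sum_antidiagonal_eq_sum_range_succ_mk]
  refine Finset.sum_congr rfl fun a _ => ?_
  rw [mw_coeff, mw_coeff]
  ring

lemma mw_dual {R : Type*} [CommRing R] [Fintype R] [DecidableEq R]
    (χ : AddChar R ℂ) (hχ : ∀ J : Ideal R, (∀ a ∈ J, χ a = 1) → J = ⊥)
    {s : ℕ} {n : Fin s → ℕ} (C : Submodule R (Π j : Fin s, Fin (n j) → R))
    (v : Π j : Fin s, Fin (n j) → R) :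
    ∑ u : C, χ (∑ j, ∑ k, (u : Π j : Fin s, Fin (n j) → R) j k * v j k)
      = if (∀ u ∈ C, ∑ j, ∑ k, u j k * v j k = 0) then (Fintype.card C : ℂ) else 0 := by
  set ℓ : (Π j : Fin s, Fin (n j) → R) →ₗ[R] R :=
    { toFun := fun u => ∑ j, ∑ k, u j k * v j k
      map_add' := fun a b => by
        simp [add_mul, Finset.sum_add_distrib]
      map_smul' := fun r a => by
        simp [Finset.mul_sum, mul_assoc] } with hℓ
  by_cases h : ∀ u ∈ C, ∑ j, ∑ k, u j k * v j k = 0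
  · rw [if_pos h]
    have : ∀ u : C, χ (∑ j, ∑ k, (u : Π j : Fin s, Fin (n j) → R) j k * v j k) = 1 :=
      fun u => by rw [h u u.2, AddChar.map_zero_eq_one]
    simp [this, Finset.card_univ]
  · rw [if_neg h]
    have hJ : Submodule.map ℓ C ≠ ⊥ := by
      intro hbot
      apply h
      intro u hu
      have hmem : ℓ u ∈ Submodule.map ℓ C := ⟨u, hu, rfl⟩
      rw [hbot, Submodule.mem_bot] at hmem
      exact hmem
    have hne : ¬ (∀ a ∈ Submodule.map ℓ C, χ a = 1) := fun hc => hJ (hχ _ hc)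
    push_neg at hne
    obtain ⟨a, haJ, ha⟩ := hne
    obtain ⟨u, huC, rfl⟩ := haJ
    set ψ : AddChar C ℂ := χ.compAddMonoidHom ((ℓ.comp C.subtype).toAddMonoidHom) with hψdef
    have hψ : ψ ≠ 0 := AddChar.ne_zero_iff.2 ⟨⟨u, huC⟩, ha⟩
    have hz := AddChar.sum_eq_zero_iff_ne_zero.2 hψ
    rw [← hz]
    rfl

/-- MacWilliams-type identity for the m-spotty poset level weight enumerator
`M_W(C) = ∑_{u ∈ C} ∏_j z_j^{⌈w(u^j)/t_j⌉}` of a linear code over a finite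
commutative Frobenius ring with `q = |R|` elements. `R^N` is identified with
`Π j, R^{n j}`, `w` is the Hamming weight (`hammingNorm`), and `t j` are the spotty
parameters with `1 ≤ t j ≤ n j`. Ceilings are expressed via `⌈(p : ℚ) / t j⌉₊`. -/
theorem m_spotty_poset_level_weight_enumerator_macwilliams
    {R : Type*} [CommRing R] [Fintype R] [DecidableEq R]
    (hR : ∃ χ : AddChar R ℂ, ∀ J : Ideal R, (∀ a ∈ J, χ a = 1) → J = ⊥)
    (s : ℕ) (hs : 0 < s) (n : Fin s → ℕ) (t : Fin s → ℕ)
    (ht : ∀ j, 1 ≤ t j ∧ t j ≤ n j)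
    (C : Submodule R (Π j : Fin s, Fin (n j) → R))
    (z : Fin s → ℂ) :
    ∑ v ∈ Finset.univ.filter
        (fun v : Π j : Fin s, Fin (n j) → R => ∀ u ∈ C, ∑ j, ∑ k, u j k * v j k = 0),
      ∏ j, z j ^ (⌈(hammingNorm (v j) : ℚ) / (t j : ℚ)⌉₊)
    = (Fintype.card C : ℂ)⁻¹ *
        ∑ u : C, ∏ j,
          ∑ p ∈ Finset.range (n j + 1),
            (∑ a ∈ Finset.range (p + 1),
              (-1 : ℂ) ^ a * ((Fintype.card R : ℂ) - 1) ^ (p - a) *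
                (Nat.choose (hammingNorm ((u : Π j : Fin s, Fin (n j) → R) j)) a : ℂ) *
                (Nat.choose (n j - hammingNorm ((u : Π j : Fin s, Fin (n j) → R) j))
                  (p - a) : ℂ)) * z j ^ (⌈(p : ℚ) / (t j : ℚ)⌉₊) := by
  obtain ⟨χ, hχ⟩ := hR
  have hcard : (Fintype.card C : ℂ) ≠ 0 := Nat.cast_ne_zero.2 Fintype.card_ne_zero
  rw [eq_inv_mul_iff_mul_eq₀ hcard]
  set f : (Π j : Fin s, Fin (n j) → R) → ℂ :=
    fun v => ∏ j, z j ^ (⌈(hammingNorm (v j) : ℚ) / (t j : ℚ)⌉₊) with hf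
  calc (Fintype.card C : ℂ) * ∑ v ∈ Finset.univ.filter
        (fun v : Π j : Fin s, Fin (n j) → R => ∀ u ∈ C, ∑ j, ∑ k, u j k * v j k = 0), f v
      = ∑ v : Π j : Fin s, Fin (n j) → R,
          (if (∀ u ∈ C, ∑ j, ∑ k, u j k * v j k = 0) then (Fintype.card C : ℂ) else 0) * f v := by
        rw [Finset.mul_sum, Finset.sum_filter]
        refine Finset.sum_congr rfl fun v _ => ?_
        by_cases h : ∀ u ∈ C, ∑ j, ∑ k, u j k * v j k = 0 <;> simp [h]
    _ = ∑ v : Π j : Fin s, Fin (n j) → R,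
          (∑ u : C, χ (∑ j, ∑ k, (u : Π j : Fin s, Fin (n j) → R) j k * v j k)) * f v := by
        refine Finset.sum_congr rfl fun v _ => ?_
        rw [mw_dual χ hχ C v]
    _ = ∑ u : C, ∑ v : Π j : Fin s, Fin (n j) → R,
          χ (∑ j, ∑ k, (u : Π j : Fin s, Fin (n j) → R) j k * v j k) * f v := by
        simp_rw [Finset.sum_mul]
        rw [Finset.sum_comm]
    _ = _ := by
        refine Finset.sum_congr rfl fun u _ => ?_
        set U : Π j : Fin s, Fin (n j) → R := (u : Π j : Fin s, Fin (n j) → R) with hU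
        calc ∑ v : Π j : Fin s, Fin (n j) → R, χ (∑ j, ∑ k, U j k * v j k) * f v
            = ∑ v : Π j : Fin s, Fin (n j) → R,
                ∏ j, (χ (∑ k, U j k * v j k) * z j ^ (⌈(hammingNorm (v j) : ℚ) / (t j : ℚ)⌉₊)) := by
              refine Finset.sum_congr rfl fun v _ => ?_
              rw [mw_map_sum χ Finset.univ (fun j => ∑ k, U j k * v j k), hf,
                Finset.prod_mul_distrib]
          _ = ∏ j, ∑ w : Fin (n j) → R,
                χ (∑ k, U j k * w k) * z j ^ (⌈(hammingNorm w : ℚ) / (t j : ℚ)⌉₊) := by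
              rw [Finset.prod_univ_sum, Fintype.piFinset_univ]
          _ = _ := by
              refine Finset.prod_congr rfl fun j _ => ?_
              have hmaps : ∀ w : Fin (n j) → R, w ∈ (Finset.univ : Finset (Fin (n j) → R)) →
                  hammingNorm w ∈ Finset.range (n j + 1) := fun w _ =>
                Finset.mem_range.2 (Nat.lt_succ_of_le
                  (by simpa using hammingNorm_le_card_fintype (x := w)))
              rw [← Finset.sum_fiberwise_of_maps_to hmaps
                (fun w => χ (∑ k, U j k * w k) * z j ^ (⌈(hammingNorm w : ℚ) / (t j : ℚ)⌉₊))]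
              refine Finset.sum_congr rfl fun p hp => ?_
              have h1 : ∑ w ∈ Finset.univ.filter (fun w : Fin (n j) → R => hammingNorm w = p),
                  χ (∑ k, U j k * w k) * z j ^ (⌈(hammingNorm w : ℚ) / (t j : ℚ)⌉₊)
                  = (∑ w ∈ Finset.univ.filter (fun w : Fin (n j) → R => hammingNorm w = p),
                      ∏ k, χ (U j k * w k)) * z j ^ (⌈(p : ℚ) / (t j : ℚ)⌉₊) := by
                rw [Finset.sum_mul]
                refine Finset.sum_congr rfl fun w hw => ?_
                rw [(Finset.mem_filter.1 hw).2, mw_map_sum χ Finset.univ (fun k => U j k * w k)]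
              rw [h1, mw_level χ hχ (U j) p]
end
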